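/- Let Z be a q-matroid with q ≥ 2 and let ≺ be a total order on its skew classes. Then Σ_{T ∈ T(Ω)} (q−1)^{n(T)} = Σ_{B ∈ B(Z)} 2^{|act_≺(B)|}, where the left sum is over all transversals and the right sum is over all bases. -/
import Mathlib


open Finset
open scoped Classical

variable {U ι : Type}

section Defs
variable [DecidableEq U] [Fintype U] [DecidableEq ι] [Fintype ι]

/-- `S` is a subtransversal: it meets each skew class at most once.
Skew classes are the fibers of `cls : U → ι`. -/
def Subtransversal (cls : U → ι) (S : Finset U) : Prop :=
  Set.InjOn cls ↑S

/-- The skew class with index `i`, as a finset. -/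
def skewClass (cls : U → ι) (i : ι) : Finset U :=
  Finset.univ.filter (fun x => cls x = i)

/-- `T` is a transversal: it meets each skew class exactly once. -/
def Transversal (cls : U → ι) (T : Finset U) : Prop :=
  Subtransversal cls T ∧ ∀ i : ι, ∃ x ∈ T, cls x = i

/-- The multimatroid rank axioms for a rank function `r` on the carrier given by
`cls : U → ι` (whose fibers, assumed nonempty, are the skew classes).
The first three fields express axiom (R1) (each transversal carries a matroid),
and `axiomR2` is axiom (R2). -/
structure IsMultimatroid (cls : U → ι) (r : Finset U → ℕ) : Prop where
  cls_surj : Function.Surjective cls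
  rank_le_card : ∀ S, Subtransversal cls S → r S ≤ S.card
  mono : ∀ S T, Subtransversal cls T → S ⊆ T → r S ≤ r T
  submod : ∀ S T, Subtransversal cls (S ∪ T) → r (S ∪ T) + r (S ∩ T) ≤ r S + r T
  axiomR2 : ∀ S, ∀ x y : U, Subtransversal cls S → cls x = cls y → x ≠ y →
    (∀ u ∈ S, cls u ≠ cls x) →
    2 * r S + 1 ≤ r (insert x S) + r (insert y S)

/-- An independent set of the multimatroid. -/
def Indep (cls : U → ι) (r : Finset U → ℕ) (S : Finset U) : Prop :=
  Subtransversal cls S ∧ r S = S.card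

/-- A basis: a maximal independent subtransversal. -/
def MMBasis (cls : U → ι) (r : Finset U → ℕ) (B : Finset U) : Prop :=
  Indep cls r B ∧ ∀ S, Indep cls r S → B ⊆ S → S = B

/-- A circuit: a minimal dependent subtransversal. -/
def Circuit (cls : U → ι) (r : Finset U → ℕ) (C : Finset U) : Prop :=
  Subtransversal cls C ∧ r C < C.card ∧ ∀ D ⊂ C, ¬ r D < D.card

/-- Non-degenerate: every skew class has at least two elements. -/
def Nondegenerate (cls : U → ι) : Prop :=
  ∀ i : ι, 2 ≤ (skewClass cls i).card

/-- An element is singular if its singleton has rank `0`. -/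
def Singular (r : Finset U → ℕ) (e : U) : Prop := r {e} = 0

end Defs

section Order
variable [DecidableEq U] [Fintype U] [DecidableEq ι] [Fintype ι] [LinearOrder ι]

/-- The skew class `i` is active with respect to the transversal `T` (in
particular, with respect to a basis): there is a circuit `C` with
`C − ω_i ⊆ T` whose `≺`-least element lies in the class `i`. -/
def Active (cls : U → ι) (r : Finset U → ℕ) (T : Finset U) (i : ι) : Prop :=
  ∃ C, Circuit cls r C ∧ C \ skewClass cls i ⊆ T ∧
    ∃ m ∈ C, cls m = i ∧ ∀ x ∈ C, i ≤ cls x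

end Order

set_option linter.unusedSectionVars false
set_option maxHeartbeats 1000000

section Aux
variable [DecidableEq U] [Fintype U] [DecidableEq ι] [Fintype ι] [LinearOrder ι]

/-- subtransversal with all classes inside `A` -/
def ASub (cls : U → ι) (A : Finset ι) (S : Finset U) : Prop :=
  Set.InjOn cls ↑S ∧ ∀ u ∈ S, cls u ∈ A

/-- rank of the minor obtained by contracting `X` -/
def rXx (r : Finset U → ℕ) (X S : Finset U) : ℕ := r (S ∪ X) - r X

def ATrans (cls : U → ι) (A : Finset ι) (T : Finset U) : Prop :=
  ASub cls A T ∧ ∀ i ∈ A, ∃ u ∈ T, cls u = i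

def AIndep (cls : U → ι) (r : Finset U → ℕ) (A : Finset ι) (X S : Finset U) : Prop :=
  ASub cls A S ∧ rXx r X S = S.card

def ABasis (cls : U → ι) (r : Finset U → ℕ) (A : Finset ι) (X B : Finset U) : Prop :=
  AIndep cls r A X B ∧ ∀ S, AIndep cls r A X S → B ⊆ S → S = B

def ACircuit (cls : U → ι) (r : Finset U → ℕ) (A : Finset ι) (X C : Finset U) : Prop :=
  ASub cls A C ∧ rXx r X C < C.card ∧ ∀ D ⊂ C, ¬ rXx r X D < D.card

def AActive (cls : U → ι) (r : Finset U → ℕ) (A : Finset ι) (X B : Finset U) (i : ι) : Prop :=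
  ∃ C, ACircuit cls r A X C ∧ C \ skewClass cls i ⊆ B ∧
    ∃ m ∈ C, cls m = i ∧ ∀ x ∈ C, i ≤ cls x

/-- the context: `X` is a subtransversal meeting exactly the classes outside `A`. -/
def Ctx (cls : U → ι) (A : Finset ι) (X : Finset U) : Prop :=
  Set.InjOn cls ↑X ∧ (∀ u ∈ X, cls u ∉ A) ∧ (∀ i, i ∉ A → ∃ u ∈ X, cls u = i)

variable {cls : U → ι} {r : Finset U → ℕ}

lemma mem_skew {i : ι} {x : U} : x ∈ skewClass cls i ↔ cls x = i := by
  simp [skewClass]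

lemma ASub.subset {A : Finset ι} {S S' : Finset U} (h : ASub cls A S) (hss : S' ⊆ S) :
    ASub cls A S' := ⟨h.1.mono (by exact_mod_cast hss), fun u hu => h.2 u (hss hu)⟩

lemma Ctx.union_inj {A : Finset ι} {X S : Finset U} (hctx : Ctx cls A X) (hS : ASub cls A S) :
    Subtransversal cls (S ∪ X) := by
  intro u hu v hv huv
  simp only [Finset.coe_union, Set.mem_union, Finset.mem_coe] at hu hv
  rcases hu with hu | hu <;> rcases hv with hv | hv
  · exact hS.1 hu hv huv
  · exact absurd (huv ▸ hS.2 u hu) (hctx.2.1 v hv)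
  · exact absurd (huv ▸ hctx.2.1 u hu) fun h => h (hS.2 v hv)
  · exact hctx.1 hu hv huv

lemma Ctx.disj {A : Finset ι} {X S : Finset U} (hctx : Ctx cls A X) (hS : ASub cls A S) :
    Disjoint S X := by
  rw [Finset.disjoint_left]
  intro u hu hX
  exact hctx.2.1 u hX (hS.2 u hu)

section WithM
variable (hM : IsMultimatroid cls r)
include hM

lemma r_empty : r ∅ = 0 := by
  have := hM.rank_le_card ∅ (by simp [Subtransversal])
  simpa using this

lemma r_single_le (x : U) : r {x} ≤ 1 := by
  have := hM.rank_le_card {x} (by simp [Subtransversal])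
  simpa using this

lemma r_insert_le {a : U} {S : Finset U} (h : Subtransversal cls (insert a S)) :
    r (insert a S) ≤ r S + 1 := by
  by_cases ha : a ∈ S
  · rw [Finset.insert_eq_self.2 ha]; omega
  · have h1 : S ∪ {a} = insert a S := by
      rw [Finset.union_comm, ← Finset.insert_eq]
    have h2 : S ∩ {a} = ∅ := by
      rw [Finset.inter_singleton_of_notMem ha]
    have hsub := hM.submod S {a} (by rwa [h1])
    rw [h1, h2] at hsub
    have := r_single_le hM a
    omega

lemma r_union_le_card (W T : Finset U) (h : Subtransversal cls (W ∪ T)) :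
    r (W ∪ T) ≤ r T + W.card := by
  induction W using Finset.induction_on with
  | empty => simp
  | @insert a W ha ih =>
    have hsub : W ∪ T ⊆ insert a W ∪ T := by
      apply Finset.union_subset_union_left (Finset.subset_insert a W)
    have hW : Subtransversal cls (W ∪ T) := h.mono (by exact_mod_cast hsub)
    have h1 : insert a W ∪ T = insert a (W ∪ T) := Finset.insert_union a W T
    have h2 : r (insert a (W ∪ T)) ≤ r (W ∪ T) + 1 := by
      by_cases haWT : a ∈ W ∪ T
      · rw [Finset.insert_eq_self.2 haWT]; omega
      · exact r_insert_le hM (h1 ▸ h)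
    rw [h1, Finset.card_insert_of_notMem ha]
    have := ih hW
    omega

lemma r_le_mono {S T : Finset U} (h : Subtransversal cls T) (hst : S ⊆ T) : r S ≤ r T :=
  hM.mono S T h hst

end WithM
end Aux

section Aux2
variable [DecidableEq U] [Fintype U] [DecidableEq ι] [Fintype ι] [LinearOrder ι]
variable {cls : U → ι} {r : Finset U → ℕ} {A : Finset ι} {X : Finset U}

lemma inj_insert {S : Finset U} {x : U} (hS : Subtransversal cls S)
    (hx : ∀ u ∈ S, cls u ≠ cls x) : Subtransversal cls (insert x S) := by
  intro u hu v hv huv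
  simp only [Finset.coe_insert, Set.mem_insert_iff, Finset.mem_coe] at hu hv
  rcases hu with rfl | hu <;> rcases hv with rfl | hv
  · rfl
  · exact absurd huv.symm (hx v hv)
  · exact absurd huv (hx u hu)
  · exact hS hu hv huv

section WithM
variable (hM : IsMultimatroid cls r)
include hM

lemma rX_add (hctx : Ctx cls A X) {S : Finset U} (hS : ASub cls A S) :
    r (S ∪ X) = rXx r X S + r X := by
  have h1 : r X ≤ r (S ∪ X) :=
    r_le_mono hM (hctx.union_inj hS) Finset.subset_union_right
  simp only [rXx]
  omega

lemma rX_le_card (hctx : Ctx cls A X) {S : Finset U} (hS : ASub cls A S) :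
    rXx r X S ≤ S.card := by
  have h1 := r_union_le_card hM S X (hctx.union_inj hS)
  have h2 := rX_add hM hctx hS
  omega

lemma AIndep.subset' (hctx : Ctx cls A X) {B S : Finset U}
    (hB : AIndep cls r A X B) (hSB : S ⊆ B) : AIndep cls r A X S := by
  have hSsub : ASub cls A S := hB.1.subset hSB
  refine ⟨hSsub, le_antisymm (rX_le_card hM hctx hSsub) ?_⟩
  have e1 : r (B ∪ X) = rXx r X B + r X := rX_add hM hctx hB.1
  have e2 : r (S ∪ X) = rXx r X S + r X := rX_add hM hctx hSsub
  have hun : (B \ S) ∪ (S ∪ X) = B ∪ X := by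
    rw [← Finset.union_assoc, Finset.sdiff_union_of_subset hSB]
  have h3 : r ((B \ S) ∪ (S ∪ X)) ≤ r (S ∪ X) + (B \ S).card := by
    apply r_union_le_card hM
    rw [hun]; exact hctx.union_inj hB.1
  rw [hun] at h3
  have h4 : (B \ S).card = B.card - S.card := Finset.card_sdiff_of_subset hSB
  have h5 : S.card ≤ B.card := Finset.card_le_card hSB
  have h6 := hB.2
  omega

lemma exists_circuit (hctx : Ctx cls A X) :
    ∀ S : Finset U, ASub cls A S → rXx r X S < S.card →
      ∃ C, C ⊆ S ∧ ACircuit cls r A X C := by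
  intro S
  induction S using Finset.strongInduction with
  | _ S ih =>
    intro hS hdep
    by_cases h : ∀ D ⊂ S, ¬ rXx r X D < D.card
    · exact ⟨S, Finset.Subset.refl S, hS, hdep, h⟩
    · push_neg at h
      obtain ⟨D, hDS, hD⟩ := h
      obtain ⟨C, hCD, hC⟩ := ih D hDS (hS.subset hDS.subset) hD
      exact ⟨C, hCD.trans hDS.subset, hC⟩

lemma basis_meets {q : ℕ} (hq : 2 ≤ q) (hcard : ∀ i : ι, (skewClass cls i).card = q)
    (hctx : Ctx cls A X) {B : Finset U} (hB : ABasis cls r A X B) {i : ι} (hi : i ∈ A) :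
    ∃ b ∈ B, cls b = i := by
  by_contra hno
  push_neg at hno
  have h2 : 1 < (skewClass cls i).card := by rw [hcard i]; omega
  obtain ⟨x, hx, y, hy, hxy⟩ := Finset.one_lt_card.1 h2
  have clsx : cls x = i := mem_skew.1 hx
  have clsy : cls y = i := mem_skew.1 hy
  have hBX : Subtransversal cls (B ∪ X) := hctx.union_inj hB.1.1
  have hclsBX : ∀ u ∈ B ∪ X, cls u ≠ cls x := by
    intro u hu
    rw [clsx]
    rcases Finset.mem_union.1 hu with hu | hu
    · exact hno u hu
    · exact fun h => hctx.2.1 u hu (h ▸ hi)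
  have hR2 := hM.axiomR2 (B ∪ X) x y hBX (by rw [clsx, clsy]) hxy hclsBX
  have hix : Subtransversal cls (insert x (B ∪ X)) := inj_insert hBX hclsBX
  have hiy : Subtransversal cls (insert y (B ∪ X)) := inj_insert hBX (by
    intro u hu; rw [clsy]; exact clsx ▸ hclsBX u hu)
  have bx := r_insert_le hM hix
  have by' := r_insert_le hM hiy
  -- one of x, y gives a strictly larger independent set
  have key : ∃ z, cls z = i ∧ r (insert z (B ∪ X)) = r (B ∪ X) + 1 := by
    rcases Nat.lt_or_ge (r (insert x (B ∪ X))) (r (B ∪ X) + 1) with h | h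
    · exact ⟨y, clsy, by omega⟩
    · exact ⟨x, clsx, by omega⟩
  obtain ⟨z, clsz, hz⟩ := key
  have hzB : z ∉ B := fun h => hno z h clsz
  have hzBX : z ∉ B ∪ X := by
    intro h
    rcases Finset.mem_union.1 h with h | h
    · exact hzB h
    · exact hctx.2.1 z h (clsz ▸ hi)
  have hind : AIndep cls r A X (insert z B) := by
    constructor
    · refine ⟨inj_insert hB.1.1.1 (fun u hu h => hno u hu (h ▸ clsz)), ?_⟩
      intro u hu
      rcases Finset.mem_insert.1 hu with rfl | hu
      · exact clsz ▸ hi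
      · exact hB.1.1.2 u hu
    · have e1 : insert z B ∪ X = insert z (B ∪ X) := Finset.insert_union z B X
      have e2 : r (B ∪ X) = rXx r X B + r X := rX_add hM hctx hB.1.1
      have e3 := hB.1.2
      have e4 : (insert z B).card = B.card + 1 := Finset.card_insert_of_notMem hzB
      simp only [rXx, e1, hz, e4]
      omega
  have := hB.2 (insert z B) hind (Finset.subset_insert z B)
  exact hzB (this ▸ Finset.mem_insert_self z B)

lemma sing_flat (hctx : Ctx cls A X) {s : U} (hsA : cls s ∈ A)
    (hs : r (insert s X) = r X) {S : Finset U} (hS : ASub cls A S)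
    (hSs : ∀ u ∈ S, cls u ≠ cls s) :
    r (insert s (S ∪ X)) = r (S ∪ X) := by
  have hsS : s ∉ S := fun h => hSs s h rfl
  have hsX : s ∉ X := fun h => hctx.2.1 s h hsA
  have hSX : Subtransversal cls (S ∪ X) := hctx.union_inj hS
  have hclsSX : ∀ u ∈ S ∪ X, cls u ≠ cls s := by
    intro u hu
    rcases Finset.mem_union.1 hu with hu | hu
    · exact hSs u hu
    · exact fun h => hctx.2.1 u hu (h ▸ hsA)
  have hins : Subtransversal cls (insert s (S ∪ X)) := inj_insert hSX hclsSX
  have hun : (S ∪ X) ∪ insert s X = insert s (S ∪ X) := by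
    ext u
    simp only [Finset.mem_union, Finset.mem_insert]
    tauto
  have hint : (S ∪ X) ∩ insert s X = X := by
    ext u
    simp only [Finset.mem_inter, Finset.mem_union, Finset.mem_insert]
    constructor
    · rintro ⟨h1, rfl | h2⟩
      · rcases h1 with h1 | h1
        · exact absurd h1 hsS
        · exact h1
      · exact h2
    · intro h; exact ⟨Or.inr h, Or.inr h⟩
  have hsub := hM.submod (S ∪ X) (insert s X) (by rwa [hun])
  rw [hun, hint, hs] at hsub
  have hmono : r (S ∪ X) ≤ r (insert s (S ∪ X)) :=
    r_le_mono hM hins (Finset.subset_insert s (S ∪ X))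
  omega

lemma sing_step (hctx : Ctx cls A X) {s x : U} (hsA : cls s ∈ A)
    (hs : r (insert s X) = r X) (hcl : cls x = cls s) (hxs : x ≠ s) {S : Finset U}
    (hS : ASub cls A S) (hSs : ∀ u ∈ S, cls u ≠ cls s) :
    r (insert x (S ∪ X)) = r (S ∪ X) + 1 := by
  have hSX : Subtransversal cls (S ∪ X) := hctx.union_inj hS
  have hclsSX : ∀ u ∈ S ∪ X, cls u ≠ cls x := by
    intro u hu
    rw [hcl]
    rcases Finset.mem_union.1 hu with hu | hu
    · exact hSs u hu
    · exact fun h => hctx.2.1 u hu (h ▸ hsA)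
  have hR2 := hM.axiomR2 (S ∪ X) x s hSX hcl hxs hclsSX
  have hflat := sing_flat hM hctx hsA hs hS hSs
  have hle := r_insert_le hM (inj_insert hSX hclsSX)
  omega

lemma sing_unique (hctx : Ctx cls A X) {x y : U} (hxA : cls x ∈ A)
    (hcl : cls x = cls y) (hxy : x ≠ y) (hx : r (insert x X) = r X)
    (hy : r (insert y X) = r X) : False := by
  have hclsX : ∀ u ∈ X, cls u ≠ cls x := fun u hu h => hctx.2.1 u hu (h ▸ hxA)
  have hR2 := hM.axiomR2 X x y hctx.1 hcl hxy hclsX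
  omega

lemma basis_not_sing (hctx : Ctx cls A X) {s : U} (hsA : cls s ∈ A)
    (hs : r (insert s X) = r X) {B : Finset U} (hB : ABasis cls r A X B) : s ∉ B := by
  intro hsB
  have e1 : r (B ∪ X) = rXx r X B + r X := rX_add hM hctx hB.1.1
  have e2 := hB.1.2
  have hBs : B = insert s (B.erase s) := (Finset.insert_erase hsB).symm
  have hers : ASub cls A (B.erase s) := hB.1.1.subset (Finset.erase_subset s B)
  have herscls : ∀ u ∈ B.erase s, cls u ≠ cls s := by
    intro u hu h
    exact (Finset.mem_erase.1 hu).1 (hB.1.1.1 (by simp [Finset.mem_erase.1 hu]) (by simp [hsB]) h)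
  have hflat : r (insert s (B.erase s ∪ X)) = r (B.erase s ∪ X) :=
    sing_flat hM hctx hsA hs hers herscls
  have hun : B ∪ X = insert s (B.erase s ∪ X) := by
    conv_lhs => rw [hBs]
    exact Finset.insert_union s (B.erase s) X
  have hle : r (B.erase s ∪ X) ≤ r X + (B.erase s).card :=
    r_union_le_card hM _ _ (hctx.union_inj hers)
  have hcard : (B.erase s).card = B.card - 1 := Finset.card_erase_of_mem hsB
  have hpos : 1 ≤ B.card := Finset.card_pos.2 ⟨s, hsB⟩
  rw [hun, hflat] at e1
  omega

end WithM
end Aux2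

section Aux3
variable [DecidableEq U] [Fintype U] [DecidableEq ι] [Fintype ι] [LinearOrder ι]
variable {cls : U → ι} {r : Finset U → ℕ} {A : Finset ι} {X : Finset U} {i0 : ι} {x : U}

lemma ctx_step (hctx : Ctx cls A X) (hi0 : i0 ∈ A) (hx : cls x = i0) :
    Ctx cls (A.erase i0) (insert x X) := by
  refine ⟨inj_insert hctx.1 (fun u hu h => hctx.2.1 u hu (h ▸ hx ▸ hi0)), ?_, ?_⟩
  · intro u hu
    rcases Finset.mem_insert.1 hu with rfl | hu
    · rw [hx]; simp
    · intro h; exact hctx.2.1 u hu (Finset.mem_of_mem_erase h)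
  · intro i hi
    by_cases hii0 : i = i0
    · exact ⟨x, Finset.mem_insert_self x X, hii0 ▸ hx⟩
    · obtain ⟨u, hu, hcu⟩ := hctx.2.2 i (fun h => hi (Finset.mem_erase.2 ⟨hii0, h⟩))
      exact ⟨u, Finset.mem_insert_of_mem hu, hcu⟩

section WithM
variable (hM : IsMultimatroid cls r)
include hM

lemma basis_up (hctx : Ctx cls A X) (hi0 : i0 ∈ A) (hx : cls x = i0)
    (hδ : r (insert x X) = r X + 1) {B' : Finset U}
    (hB' : ABasis cls r (A.erase i0) (insert x X) B') :
    ABasis cls r A X (insert x B') ∧ x ∉ B' := by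
  have hctx' : Ctx cls (A.erase i0) (insert x X) := ctx_step hctx hi0 hx
  have hxB' : x ∉ B' := fun h =>
    (Finset.mem_erase.1 (hB'.1.1.2 x h)).1 (hx)
  have hclsB' : ∀ u ∈ B', cls u ≠ cls x := by
    intro u hu h
    exact (Finset.mem_erase.1 (hB'.1.1.2 u hu)).1 (h.trans hx)
  have hsub : ASub cls A (insert x B') := by
    refine ⟨inj_insert hB'.1.1.1 hclsB', ?_⟩
    intro u hu
    rcases Finset.mem_insert.1 hu with rfl | hu
    · exact hx ▸ hi0
    · exact Finset.mem_of_mem_erase (hB'.1.1.2 u hu)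
  have hun : insert x B' ∪ X = B' ∪ insert x X := by
    ext u; simp only [Finset.mem_union, Finset.mem_insert]; tauto
  have e1 : r (B' ∪ insert x X) = rXx r (insert x X) B' + r (insert x X) :=
    rX_add hM hctx' hB'.1.1
  have e2 := hB'.1.2
  have hind : AIndep cls r A X (insert x B') := by
    refine ⟨hsub, ?_⟩
    have ecard : (insert x B').card = B'.card + 1 := Finset.card_insert_of_notMem hxB'
    have h0 : rXx r X (insert x B') = r (insert x B' ∪ X) - r X := rfl
    rw [h0, hun, e1, e2, hδ, ecard]
    omega
  refine ⟨⟨hind, ?_⟩, hxB'⟩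
  intro S hS hBS
  have hxS : x ∈ S := hBS (Finset.mem_insert_self x B')
  have hSx : ASub cls (A.erase i0) (S.erase x) := by
    refine ⟨hS.1.1.mono (by exact_mod_cast Finset.erase_subset x S), ?_⟩
    intro u hu
    have huS := Finset.mem_of_mem_erase hu
    refine Finset.mem_erase.2 ⟨?_, hS.1.2 u huS⟩
    intro h
    exact (Finset.mem_erase.1 hu).1 (hS.1.1 (by simpa using huS) (by simpa using hxS) (by rw [h, hx]))
  have hunS : S.erase x ∪ insert x X = S ∪ X := by
    ext u
    simp only [Finset.mem_union, Finset.mem_erase, Finset.mem_insert]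
    constructor
    · rintro (⟨_, h⟩ | (rfl | h))
      · exact Or.inl h
      · exact Or.inl hxS
      · exact Or.inr h
    · rintro (h | h)
      · by_cases hux : u = x
        · exact Or.inr (Or.inl hux)
        · exact Or.inl ⟨hux, h⟩
      · exact Or.inr (Or.inr h)
  have eS : r (S ∪ X) = rXx r X S + r X := rX_add hM hctx hS.1
  have hSind : AIndep cls r (A.erase i0) (insert x X) (S.erase x) := by
    refine ⟨hSx, ?_⟩
    have ecard : (S.erase x).card = S.card - 1 := Finset.card_erase_of_mem hxS
    have hpos : 1 ≤ S.card := Finset.card_pos.2 ⟨x, hxS⟩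
    have e3 := hS.2
    have h0 : rXx r (insert x X) (S.erase x) = r (S.erase x ∪ insert x X) - r (insert x X) := rfl
    rw [h0, hunS, eS, e3, hδ, ecard]
    omega
  have hB'S : B' ⊆ S.erase x := by
    intro b hb
    exact Finset.mem_erase.2 ⟨fun h => hxB' (h ▸ hb), hBS (Finset.mem_insert_of_mem hb)⟩
  have := hB'.2 (S.erase x) hSind hB'S
  rw [← this]
  exact (Finset.insert_erase hxS).symm

lemma basis_down (hctx : Ctx cls A X) (hi0 : i0 ∈ A) (hx : cls x = i0)
    (hδ : r (insert x X) = r X + 1) {B : Finset U}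
    (hB : ABasis cls r A X B) (hxB : x ∈ B) :
    ABasis cls r (A.erase i0) (insert x X) (B.erase x) := by
  have hctx' : Ctx cls (A.erase i0) (insert x X) := ctx_step hctx hi0 hx
  have hsub : ASub cls (A.erase i0) (B.erase x) := by
    refine ⟨hB.1.1.1.mono (by exact_mod_cast Finset.erase_subset x B), ?_⟩
    intro u hu
    have huB := Finset.mem_of_mem_erase hu
    refine Finset.mem_erase.2 ⟨?_, hB.1.1.2 u huB⟩
    intro h
    exact (Finset.mem_erase.1 hu).1 (hB.1.1.1 (by simpa using huB) (by simpa using hxB) (by rw [h, hx]))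
  have hun : B.erase x ∪ insert x X = B ∪ X := by
    ext u
    simp only [Finset.mem_union, Finset.mem_erase, Finset.mem_insert]
    constructor
    · rintro (⟨_, h⟩ | (rfl | h))
      · exact Or.inl h
      · exact Or.inl hxB
      · exact Or.inr h
    · rintro (h | h)
      · by_cases hux : u = x
        · exact Or.inr (Or.inl hux)
        · exact Or.inl ⟨hux, h⟩
      · exact Or.inr (Or.inr h)
  have eB : r (B ∪ X) = rXx r X B + r X := rX_add hM hctx hB.1.1
  have hind : AIndep cls r (A.erase i0) (insert x X) (B.erase x) := by
    refine ⟨hsub, ?_⟩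
    have ecard : (B.erase x).card = B.card - 1 := Finset.card_erase_of_mem hxB
    have hpos : 1 ≤ B.card := Finset.card_pos.2 ⟨x, hxB⟩
    have e3 := hB.1.2
    have h0 : rXx r (insert x X) (B.erase x) = r (B.erase x ∪ insert x X) - r (insert x X) := rfl
    rw [h0, hun, eB, e3, hδ, ecard]
    omega
  refine ⟨hind, ?_⟩
  intro S hS hBS
  have hxS : x ∉ S := fun h => (Finset.mem_erase.1 (hS.1.2 x h)).1 hx
  have hSsub : ASub cls A (insert x S) := by
    refine ⟨inj_insert hS.1.1 (fun u hu h =>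
      (Finset.mem_erase.1 (hS.1.2 u hu)).1 (h.trans hx)), ?_⟩
    intro u hu
    rcases Finset.mem_insert.1 hu with rfl | hu
    · exact hx ▸ hi0
    · exact Finset.mem_of_mem_erase (hS.1.2 u hu)
  have hunS : insert x S ∪ X = S ∪ insert x X := by
    ext u; simp only [Finset.mem_union, Finset.mem_insert]; tauto
  have eS : r (S ∪ insert x X) = rXx r (insert x X) S + r (insert x X) :=
    rX_add hM hctx' hS.1
  have hSind : AIndep cls r A X (insert x S) := by
    refine ⟨hSsub, ?_⟩
    have ecard : (insert x S).card = S.card + 1 := Finset.card_insert_of_notMem hxS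
    have e3 := hS.2
    have h0 : rXx r X (insert x S) = r (insert x S ∪ X) - r X := rfl
    rw [h0, hunS, eS, e3, hδ, ecard]
    omega
  have hBsub : B ⊆ insert x S := by
    intro b hb
    by_cases hbx : b = x
    · exact hbx ▸ Finset.mem_insert_self x S
    · exact Finset.mem_insert_of_mem (hBS (Finset.mem_erase.2 ⟨hbx, hb⟩))
  have := hB.2 (insert x S) hSind hBsub
  rw [← this, Finset.erase_insert hxS]

end WithM
end Aux3

section Aux4
variable [DecidableEq U] [Fintype U] [DecidableEq ι] [Fintype ι] [LinearOrder ι]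
variable {cls : U → ι} {r : Finset U → ℕ} {A : Finset ι} {X : Finset U} {i0 : ι} {x : U}

section WithM
variable (hM : IsMultimatroid cls r)
include hM

lemma act_top (hctx : Ctx cls A X) (hi0 : i0 ∈ A) (hmax : ∀ j ∈ A, j ≤ i0) {B : Finset U} :
    AActive cls r A X B i0 ↔ ∃ s, cls s = i0 ∧ r (insert s X) = r X := by
  constructor
  · rintro ⟨C, hC, _, m, hmC, hmi, hmin⟩
    have hCm : ∀ u ∈ C, u = m := by
      intro u hu
      have h1 : cls u = i0 := le_antisymm (hmax _ (hC.1.2 u hu)) (hmin u hu)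
      exact hC.1.1 (by simpa using hu) (by simpa using hmC) (h1.trans hmi.symm)
    have hCeq : C = {m} := Finset.eq_singleton_iff_unique_mem.2 ⟨hmC, hCm⟩
    have hdep := hC.2.1
    rw [hCeq] at hdep
    simp only [rXx, ← Finset.insert_eq, Finset.card_singleton] at hdep
    have hmono : r X ≤ r (insert m X) :=
      r_le_mono hM (inj_insert hctx.1 (fun u hu h => hctx.2.1 u hu (by rw [h, hmi]; exact hi0)))
        (Finset.subset_insert m X)
    exact ⟨m, hmi, by omega⟩
  · rintro ⟨s, hsi, hs⟩
    have hcir : ACircuit cls r A X {s} := by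
      refine ⟨⟨?_, ?_⟩, ?_, ?_⟩
      · intro a ha b hb _
        simp only [Finset.coe_singleton, Set.mem_singleton_iff] at ha hb
        rw [ha, hb]
      · intro u hu
        rw [Finset.mem_singleton.1 hu, hsi]; exact hi0
      · simp only [rXx, ← Finset.insert_eq, Finset.card_singleton, hs]; omega
      · intro D hD
        rw [Finset.ssubset_singleton_iff.1 hD]
        simp [rXx]
    refine ⟨{s}, hcir, ?_, s, Finset.mem_singleton_self s, hsi, ?_⟩
    · intro u hu
      rw [Finset.mem_sdiff] at hu
      exact absurd (mem_skew.2 (by rw [Finset.mem_singleton.1 hu.1, hsi])) hu.2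
    · intro z hz
      rw [Finset.mem_singleton.1 hz, hsi]

lemma act_transfer (hctx : Ctx cls A X) (hi0 : i0 ∈ A) (hmax : ∀ j ∈ A, j ≤ i0)
    (hx : cls x = i0) (hδ : r (insert x X) = r X + 1) {B : Finset U}
    (hB : ABasis cls r A X B) (hxB : x ∈ B) {i : ι} (hiA : i ∈ A) (hii0 : i ≠ i0) :
    AActive cls r A X B i ↔ AActive cls r (A.erase i0) (insert x X) (B.erase x) i := by
  have hctx' := ctx_step hctx hi0 hx
  have hB'ind : AIndep cls r (A.erase i0) (insert x X) (B.erase x) :=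
    (basis_down hM hctx hi0 hx hδ hB hxB).1
  constructor
  · rintro ⟨C, hC, hCB, m, hmC, hmi, hmin⟩
    have huniq : ∀ u ∈ C, cls u = i → u = m :=
      fun u hu h => hC.1.1 (by simpa using hu) (by simpa using hmC) (h.trans hmi.symm)
    have hmB : m ∉ B := by
      intro hmBmem
      have hCB' : C ⊆ B := by
        intro u hu
        by_cases h : cls u = i
        · exact (huniq u hu h) ▸ hmBmem
        · exact hCB (Finset.mem_sdiff.2 ⟨hu, fun hh => h (mem_skew.1 hh)⟩)
      have h1 := (AIndep.subset' hM hctx hB.1 hCB').2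
      have h2 := hC.2.1
      omega
    have hCi0 : ∀ u ∈ C, cls u = i0 → u = x := by
      intro u hu h
      have huB : u ∈ B := hCB (Finset.mem_sdiff.2 ⟨hu,
        fun hh => hii0 ((mem_skew.1 hh).symm.trans h)⟩)
      exact hB.1.1.1 (by simpa using huB) (by simpa using hxB) (by rw [h, hx])
    set D := C.erase x with hD
    have hDC : D ⊆ C := Finset.erase_subset x C
    have hDsub : ASub cls (A.erase i0) D := by
      refine ⟨hC.1.1.mono (by exact_mod_cast hDC), ?_⟩
      intro u hu
      refine Finset.mem_erase.2 ⟨?_, hC.1.2 u (hDC hu)⟩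
      intro h
      exact (Finset.mem_erase.1 hu).1 (hCi0 u (hDC hu) h)
    have hDdep : rXx r (insert x X) D < D.card := by
      have eC : r (C ∪ X) = rXx r X C + r X := rX_add hM hctx hC.1
      have hdep := hC.2.1
      by_cases hxC : x ∈ C
      · have hun : D ∪ insert x X = C ∪ X := by
          ext u
          simp only [hD, Finset.mem_union, Finset.mem_erase, Finset.mem_insert]
          constructor
          · rintro (⟨_, h⟩ | (rfl | h))
            · exact Or.inl h
            · exact Or.inl hxC
            · exact Or.inr h
          · rintro (h | h)
            · by_cases hux : u = x
              · exact Or.inr (Or.inl hux)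
              · exact Or.inl ⟨hux, h⟩
            · exact Or.inr (Or.inr h)
        have hmx : m ≠ x := fun h => hii0 (by rw [← hmi, h, hx])
        have hc2 : 2 ≤ C.card := Finset.one_lt_card.2 ⟨m, hmC, x, hxC, hmx⟩
        have ecard : D.card = C.card - 1 := Finset.card_erase_of_mem hxC
        have h0 : rXx r (insert x X) D = r (D ∪ insert x X) - r (insert x X) := rfl
        rw [h0, hun, eC, hδ, ecard]
        omega
      · have hDC' : D = C := Finset.erase_eq_of_notMem hxC
        have hun : D ∪ insert x X = insert x (C ∪ X) := by
          rw [hDC']; ext u; simp only [Finset.mem_union, Finset.mem_insert]; tauto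
        have hle : r (insert x (C ∪ X)) ≤ r (C ∪ X) + 1 := by
          apply r_insert_le hM
          apply inj_insert (hctx.union_inj hC.1)
          intro u hu h
          rcases Finset.mem_union.1 hu with hu | hu
          · exact hxC ((hCi0 u hu (h.trans hx)) ▸ hu)
          · exact hctx.2.1 u hu (by rw [h, hx]; exact hi0)
        have h0 : rXx r (insert x X) D = r (D ∪ insert x X) - r (insert x X) := rfl
        rw [h0, hun, hδ, hDC']
        omega
    obtain ⟨C'', hC''D, hC''⟩ := exists_circuit hM hctx' D hDsub hDdep
    have hmC'' : m ∈ C'' := by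
      by_contra hm
      have hsub : C'' ⊆ B.erase x := by
        intro u hu
        have huD := hC''D hu
        have huC := hDC huD
        have hui : cls u ≠ i := fun h => hm ((huniq u huC h) ▸ hu)
        exact Finset.mem_erase.2 ⟨(Finset.mem_erase.1 huD).1,
          hCB (Finset.mem_sdiff.2 ⟨huC, fun hh => hui (mem_skew.1 hh)⟩)⟩
      have h1 := (AIndep.subset' hM hctx' hB'ind hsub).2
      have h2 := hC''.2.1
      omega
    refine ⟨C'', hC'', ?_, m, hmC'', hmi, fun z hz => hmin z (hDC (hC''D hz))⟩
    intro u hu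
    rw [Finset.mem_sdiff] at hu
    have huD := hC''D hu.1
    exact Finset.mem_erase.2 ⟨(Finset.mem_erase.1 huD).1,
      hCB (Finset.mem_sdiff.2 ⟨hDC huD, hu.2⟩)⟩
  · rintro ⟨C', hC', hC'B, m, hmC', hmi, hmin⟩
    have hxC' : x ∉ C' := fun h => (Finset.mem_erase.1 (hC'.1.2 x h)).1 hx
    set E := insert x C' with hE
    have hEsub : ASub cls A E := by
      refine ⟨inj_insert hC'.1.1 (fun u hu h =>
        (Finset.mem_erase.1 (hC'.1.2 u hu)).1 (h.trans hx)), ?_⟩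
      intro u hu
      rcases Finset.mem_insert.1 hu with rfl | hu
      · exact hx ▸ hi0
      · exact Finset.mem_of_mem_erase (hC'.1.2 u hu)
    have hEdep : rXx r X E < E.card := by
      have eC' : r (C' ∪ insert x X) = rXx r (insert x X) C' + r (insert x X) :=
        rX_add hM hctx' hC'.1
      have hdep := hC'.2.1
      have hun : E ∪ X = C' ∪ insert x X := by
        ext u; simp only [hE, Finset.mem_union, Finset.mem_insert]; tauto
      have ecard : E.card = C'.card + 1 := Finset.card_insert_of_notMem hxC'
      have h0 : rXx r X E = r (E ∪ X) - r X := rfl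
      rw [h0, hun, eC', hδ, ecard]
      omega
    obtain ⟨C, hCE, hC⟩ := exists_circuit hM hctx E hEsub hEdep
    have huniq' : ∀ u ∈ C', cls u = i → u = m :=
      fun u hu h => hC'.1.1 (by simpa using hu) (by simpa using hmC') (h.trans hmi.symm)
    have hmC : m ∈ C := by
      by_contra hm
      have hsub : C ⊆ B := by
        intro u hu
        rcases Finset.mem_insert.1 (hCE hu) with rfl | huC'
        · exact hxB
        · have hui : cls u ≠ i := fun h => hm ((huniq' u huC' h) ▸ hu)
          exact Finset.mem_of_mem_erase (hC'B (Finset.mem_sdiff.2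
            ⟨huC', fun hh => hui (mem_skew.1 hh)⟩))
      have h1 := (AIndep.subset' hM hctx hB.1 hsub).2
      have h2 := hC.2.1
      omega
    refine ⟨C, hC, ?_, m, hmC, hmi, ?_⟩
    · intro u hu
      rw [Finset.mem_sdiff] at hu
      rcases Finset.mem_insert.1 (hCE hu.1) with rfl | huC'
      · exact hxB
      · exact Finset.mem_of_mem_erase (hC'B (Finset.mem_sdiff.2 ⟨huC', hu.2⟩))
    · intro z hz
      rcases Finset.mem_insert.1 (hCE hz) with rfl | hz'
      · rw [hx]; exact hmax i hiA
      · exact hmin z hz'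

end WithM
end Aux4

section Aux5
variable [DecidableEq U] [Fintype U] [DecidableEq ι] [Fintype ι] [LinearOrder ι]
variable {cls : U → ι} {r : Finset U → ℕ} {A : Finset ι} {X : Finset U} {i0 : ι} {x : U}

lemma ASub.mono_set {A' : Finset ι} {S : Finset U} (h : ASub cls A' S) (hAA : A' ⊆ A) :
    ASub cls A S := ⟨h.1, fun u hu => hAA (h.2 u hu)⟩

lemma sum_decomp (P : Finset U → Prop) (P' : U → Finset U → Prop) (f : Finset U → ℕ)
    (K : Finset U)
    (h1 : ∀ T, P T ↔ ∃ x ∈ K, ∃ T', P' x T' ∧ T = insert x T')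
    (h2 : ∀ x ∈ K, ∀ y ∈ K, ∀ T', P' y T' → x ∉ T') :
    ∑ T ∈ Finset.univ.filter P, f T
      = ∑ x ∈ K, ∑ T' ∈ Finset.univ.filter (P' x), f (insert x T') := by
  have hset : Finset.univ.filter P
      = K.biUnion (fun x => (Finset.univ.filter (P' x)).image (insert x)) := by
    ext T
    simp only [Finset.mem_filter, Finset.mem_univ, true_and, Finset.mem_biUnion,
      Finset.mem_image]
    rw [h1]
    constructor
    · rintro ⟨x, hx, T', hT', rfl⟩; exact ⟨x, hx, T', ⟨hT', rfl⟩⟩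
    · rintro ⟨x, hx, T', hT', rfl⟩; exact ⟨x, hx, T', hT', rfl⟩
  have hdisj : Set.PairwiseDisjoint (↑K)
      (fun x => (Finset.univ.filter (P' x)).image (insert x)) := by
    intro a ha b hb hab
    simp only [Function.onFun]
    rw [Finset.disjoint_left]
    rintro T hTa hTb
    obtain ⟨T1, hT1, rfl⟩ := Finset.mem_image.1 hTa
    obtain ⟨T2, hT2, heq⟩ := Finset.mem_image.1 hTb
    have haT : a ∈ insert b T2 := by
      rw [heq]; exact Finset.mem_insert_self a T1
    rcases Finset.mem_insert.1 haT with h | h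
    · exact hab h
    · exact h2 a (Finset.mem_coe.1 ha) b (Finset.mem_coe.1 hb) T2
        (Finset.mem_filter.1 hT2).2 h
  rw [hset, Finset.sum_biUnion hdisj]
  apply Finset.sum_congr rfl
  intro x hx
  apply Finset.sum_image
  intro T1 hT1 T2 hT2 heq
  have h1' : x ∉ T1 := h2 x hx x hx T1 (Finset.mem_filter.1 hT1).2
  have h2' : x ∉ T2 := h2 x hx x hx T2 (Finset.mem_filter.1 hT2).2
  rw [← Finset.erase_insert h1', heq, Finset.erase_insert h2']

section WithM
variable (hM : IsMultimatroid cls r)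
include hM

lemma key_lemma {q : ℕ} (hq : 2 ≤ q) (hcard : ∀ i : ι, (skewClass cls i).card = q) :
    ∀ (n : ℕ) (A : Finset ι) (X : Finset U), A.card = n → Ctx cls A X →
    (∑ T ∈ Finset.univ.filter (fun T => ATrans cls A T), (q - 1) ^ (T.card - rXx r X T))
      = ∑ B ∈ Finset.univ.filter (fun B => ABasis cls r A X B),
          2 ^ (A.filter (fun i => AActive cls r A X B i)).card := by
  intro n
  induction n with
  | zero =>
    intro A X hA0 hctx
    have hAe : A = ∅ := Finset.card_eq_zero.1 hA0
    subst hAe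
    have hrX0 : rXx r X ∅ = 0 := by
      simp [rXx]
    have hT1 : Finset.univ.filter (fun T => ATrans cls (∅ : Finset ι) T) = {∅} := by
      ext T
      simp only [Finset.mem_filter, Finset.mem_univ, true_and, Finset.mem_singleton]
      constructor
      · intro h
        exact Finset.eq_empty_iff_forall_notMem.2
          (fun u hu => by simpa using h.1.2 u hu)
      · rintro rfl
        exact ⟨⟨by intro a ha; exact absurd ha (by simp), by simp⟩, by simp⟩
    have hB1 : Finset.univ.filter (fun B => ABasis cls r (∅ : Finset ι) X B) = {∅} := by
      ext B
      simp only [Finset.mem_filter, Finset.mem_univ, true_and, Finset.mem_singleton]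
      constructor
      · intro h
        exact Finset.eq_empty_iff_forall_notMem.2
          (fun u hu => by simpa using h.1.1.2 u hu)
      · rintro rfl
        refine ⟨⟨⟨by intro a ha; exact absurd ha (by simp), by simp⟩, by simp [hrX0]⟩, ?_⟩
        intro S hS _
        exact Finset.eq_empty_iff_forall_notMem.2
          (fun u hu => by simpa using hS.1.2 u hu)
    rw [hT1, hB1]
    simp [hrX0]
  | succ n ih =>
    intro A X hAcard hctx
    have hne : A.Nonempty := Finset.card_pos.1 (by omega)
    obtain ⟨i0, hi0, hmax⟩ : ∃ i0, i0 ∈ A ∧ ∀ j ∈ A, j ≤ i0 :=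
      ⟨A.max' hne, A.max'_mem hne, fun j hj => A.le_max' j hj⟩
    have hAecard : (A.erase i0).card = n := by
      rw [Finset.card_erase_of_mem hi0]; omega
    obtain ⟨K, hKmem, hKq⟩ : ∃ K : Finset U, (∀ y : U, y ∈ K ↔ cls y = i0) ∧ K.card = q :=
      ⟨skewClass cls i0, fun y => mem_skew, hcard i0⟩
    -- transversal decomposition
    have hTiff : ∀ T, ATrans cls A T ↔ ∃ x ∈ K, ∃ T', ATrans cls (A.erase i0) T' ∧ T = insert x T' := by
      intro T
      constructor
      · intro hT
        obtain ⟨b, hbT, hbi⟩ := hT.2 i0 hi0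
        refine ⟨b, (hKmem b).2 hbi, T.erase b, ⟨⟨?_, ?_⟩, ?_⟩, (Finset.insert_erase hbT).symm⟩
        · exact hT.1.1.mono (by exact_mod_cast Finset.erase_subset b T)
        · intro u hu
          refine Finset.mem_erase.2 ⟨?_, hT.1.2 u (Finset.mem_of_mem_erase hu)⟩
          intro h
          exact (Finset.mem_erase.1 hu).1 (hT.1.1
            (by simpa using Finset.mem_of_mem_erase hu) (by simpa using hbT)
            (by rw [h, hbi]))
        · intro i hiA'
          obtain ⟨u, huT, hcu⟩ := hT.2 i (Finset.mem_of_mem_erase hiA')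
          refine ⟨u, Finset.mem_erase.2 ⟨?_, huT⟩, hcu⟩
          intro h
          exact (Finset.mem_erase.1 hiA').1 (by rw [← hcu, h, hbi])
      · rintro ⟨x, hxK, T', hT', rfl⟩
        have hxi := (hKmem x).1 hxK
        have hclsT' : ∀ u ∈ T', cls u ≠ cls x :=
          fun u hu h => (Finset.mem_erase.1 (hT'.1.2 u hu)).1 (h.trans hxi)
        refine ⟨⟨inj_insert hT'.1.1 hclsT', ?_⟩, ?_⟩
        · intro u hu
          rcases Finset.mem_insert.1 hu with rfl | hu
          · exact hxi ▸ hi0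
          · exact Finset.mem_of_mem_erase (hT'.1.2 u hu)
        · intro i hiA
          by_cases h : i = i0
          · exact ⟨x, Finset.mem_insert_self x T', h ▸ hxi⟩
          · obtain ⟨u, huT, hcu⟩ := hT'.2 i (Finset.mem_erase.2 ⟨h, hiA⟩)
            exact ⟨u, Finset.mem_insert_of_mem huT, hcu⟩
    have hnotinT : ∀ x ∈ K, ∀ y ∈ K, ∀ T', ATrans cls (A.erase i0) T' → x ∉ T' := by
      intro x hxK y _ T' hT' hmem
      exact (Finset.mem_erase.1 (hT'.1.2 x hmem)).1 ((hKmem x).1 hxK)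
    rw [sum_decomp (fun T => ATrans cls A T) (fun x T' => ATrans cls (A.erase i0) T') _ K hTiff hnotinT]
    -- exponent computation for insert
    have hexp : ∀ x, cls x = i0 → r (insert x X) = r X + 1 → ∀ T', ASub cls (A.erase i0) T' →
        (insert x T').card - rXx r X (insert x T') = T'.card - rXx r (insert x X) T' := by
      intro x hxi hδx T' hT'
      have hctx' := ctx_step hctx hi0 hxi
      have hxT' : x ∉ T' := fun h => (Finset.mem_erase.1 (hT'.2 x h)).1 hxi
      have hunx : insert x T' ∪ X = T' ∪ insert x X := by
        ext u; simp only [Finset.mem_union, Finset.mem_insert]; tauto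
      have e2 : r (T' ∪ insert x X) = rXx r (insert x X) T' + (r X + 1) := by
        rw [rX_add hM hctx' hT', hδx]
      have h0 : rXx r X (insert x T') = r (insert x T' ∪ X) - r X := rfl
      rw [hunx, e2] at h0
      have ecard : (insert x T').card = T'.card + 1 := Finset.card_insert_of_notMem hxT'
      omega
    by_cases hsing : ∃ s ∈ K, r (insert s X) = r X
    · -- singular case
      obtain ⟨s, hsK, hs⟩ := hsing
      have hclss : cls s = i0 := (hKmem s).1 hsK
      have hsA : cls s ∈ A := hclss ▸ hi0
      have hδ : ∀ x ∈ K, x ≠ s → r (insert x X) = r X + 1 := by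
        intro x hxK hxs
        have hres := sing_step hM hctx hsA hs (((hKmem x).1 hxK).trans hclss.symm) hxs
          (S := ∅) ⟨by intro a ha; exact absurd ha (by simp), by simp⟩ (by simp)
        simpa using hres
      set Lstar := ∑ T' ∈ Finset.univ.filter (fun T' => ATrans cls (A.erase i0) T'),
          (q - 1) ^ (T'.card - rXx r X T') with hLdef
      -- inner sums
      have hinner_s : (∑ T' ∈ Finset.univ.filter (fun T' => ATrans cls (A.erase i0) T'),
          (q - 1) ^ ((insert s T').card - rXx r X (insert s T'))) = (q - 1) * Lstar := by
        rw [hLdef, Finset.mul_sum]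
        apply Finset.sum_congr rfl
        intro T' hT'mem
        have hT' : ATrans cls (A.erase i0) T' := (Finset.mem_filter.1 hT'mem).2
        have hsT' : s ∉ T' := fun h => (Finset.mem_erase.1 (hT'.1.2 s h)).1 hclss
        have hclsT' : ∀ u ∈ T', cls u ≠ cls s :=
          fun u hu h => (Finset.mem_erase.1 (hT'.1.2 u hu)).1 (h.trans hclss)
        have hflat : r (insert s (T' ∪ X)) = r (T' ∪ X) :=
          sing_flat hM hctx hsA hs (hT'.1.mono_set (Finset.erase_subset i0 A)) hclsT'
        have hun : insert s T' ∪ X = insert s (T' ∪ X) := Finset.insert_union s T' X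
        have h0 : rXx r X (insert s T') = r (insert s T' ∪ X) - r X := rfl
        rw [hun, hflat] at h0
        have eadd : r (T' ∪ X) = rXx r X T' + r X :=
          rX_add hM hctx (hT'.1.mono_set (Finset.erase_subset i0 A))
        have hle : rXx r X T' ≤ T'.card :=
          rX_le_card hM hctx (hT'.1.mono_set (Finset.erase_subset i0 A))
        have ecard : (insert s T').card = T'.card + 1 := Finset.card_insert_of_notMem hsT'
        have hexps : (insert s T').card - rXx r X (insert s T')
            = (T'.card - rXx r X T') + 1 := by omega
        rw [hexps, pow_succ, mul_comm]
      have hinner_ne : ∀ x ∈ K, x ≠ s →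
          (∑ T' ∈ Finset.univ.filter (fun T' => ATrans cls (A.erase i0) T'),
            (q - 1) ^ ((insert x T').card - rXx r X (insert x T'))) = Lstar := by
        intro x hxK hxs
        rw [hLdef]
        apply Finset.sum_congr rfl
        intro T' hT'mem
        have hT' : ATrans cls (A.erase i0) T' := (Finset.mem_filter.1 hT'mem).2
        have hclsT' : ∀ u ∈ T', cls u ≠ cls s :=
          fun u hu h => (Finset.mem_erase.1 (hT'.1.2 u hu)).1 (h.trans hclss)
        have hxT' : x ∉ T' :=
          fun h => (Finset.mem_erase.1 (hT'.1.2 x h)).1 ((hKmem x).1 hxK)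
        have hstep : r (insert x (T' ∪ X)) = r (T' ∪ X) + 1 :=
          sing_step hM hctx hsA hs (((hKmem x).1 hxK).trans hclss.symm) hxs
            (hT'.1.mono_set (Finset.erase_subset i0 A)) hclsT'
        have hun : insert x T' ∪ X = insert x (T' ∪ X) := Finset.insert_union x T' X
        have h0 : rXx r X (insert x T') = r (insert x T' ∪ X) - r X := rfl
        rw [hun, hstep] at h0
        have eadd : r (T' ∪ X) = rXx r X T' + r X :=
          rX_add hM hctx (hT'.1.mono_set (Finset.erase_subset i0 A))
        have ecard : (insert x T').card = T'.card + 1 := Finset.card_insert_of_notMem hxT'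
        have hexpx : (insert x T').card - rXx r X (insert x T')
            = T'.card - rXx r X T' := by omega
        rw [hexpx]
      -- minor transversal sums all equal Lstar
      have hLx : ∀ x ∈ K, x ≠ s →
          (∑ T' ∈ Finset.univ.filter (fun T' => ATrans cls (A.erase i0) T'),
            (q - 1) ^ (T'.card - rXx r (insert x X) T')) = Lstar := by
        intro x hxK hxs
        rw [hLdef]
        apply Finset.sum_congr rfl
        intro T' hT'mem
        have hT' : ATrans cls (A.erase i0) T' := (Finset.mem_filter.1 hT'mem).2
        have hclsT' : ∀ u ∈ T', cls u ≠ cls s :=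
          fun u hu h => (Finset.mem_erase.1 (hT'.1.2 u hu)).1 (h.trans hclss)
        have hstep : r (insert x (T' ∪ X)) = r (T' ∪ X) + 1 :=
          sing_step hM hctx hsA hs (((hKmem x).1 hxK).trans hclss.symm) hxs
            (hT'.1.mono_set (Finset.erase_subset i0 A)) hclsT'
        have hun : T' ∪ insert x X = insert x (T' ∪ X) := Finset.union_insert x T' X
        have h0 : rXx r (insert x X) T' = r (T' ∪ insert x X) - r (insert x X) := rfl
        rw [hun, hstep, hδ x hxK hxs] at h0
        have eadd : r (T' ∪ X) = rXx r X T' + r X :=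
          rX_add hM hctx (hT'.1.mono_set (Finset.erase_subset i0 A))
        have : rXx r (insert x X) T' = rXx r X T' := by omega
        rw [this]
      -- basis decomposition
      have hBiff : ∀ B, ABasis cls r A X B ↔
          ∃ x ∈ K.erase s, ∃ B', ABasis cls r (A.erase i0) (insert x X) B' ∧ B = insert x B' := by
        intro B
        constructor
        · intro hB
          obtain ⟨b, hbB, hbi⟩ := basis_meets hM hq hcard hctx hB hi0
          have hbK : b ∈ K := (hKmem b).2 hbi
          have hsnB : s ∉ B := basis_not_sing hM hctx hsA hs hB
          have hbs : b ≠ s := fun h => hsnB (h ▸ hbB)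
          exact ⟨b, Finset.mem_erase.2 ⟨hbs, hbK⟩, B.erase b,
            basis_down hM hctx hi0 hbi (hδ b hbK hbs) hB hbB, (Finset.insert_erase hbB).symm⟩
        · rintro ⟨x, hxKE, B', hB', rfl⟩
          have hxK := Finset.mem_of_mem_erase hxKE
          have hxs := (Finset.mem_erase.1 hxKE).1
          exact (basis_up hM hctx hi0 ((hKmem x).1 hxK) (hδ x hxK hxs) hB').1
      have hnotinB : ∀ x ∈ K.erase s, ∀ y ∈ K.erase s, ∀ B',
          ABasis cls r (A.erase i0) (insert y X) B' → x ∉ B' := by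
        intro x hxK y _ B' hB' hmem
        exact (Finset.mem_erase.1 (hB'.1.1.2 x hmem)).1 ((hKmem x).1 (Finset.mem_of_mem_erase hxK))
      rw [sum_decomp (fun B => ABasis cls r A X B)
        (fun x B' => ABasis cls r (A.erase i0) (insert x X) B') _ (K.erase s) hBiff hnotinB]
      -- activity counts
      have hact : ∀ x ∈ K.erase s, ∀ B', ABasis cls r (A.erase i0) (insert x X) B' →
          (A.filter (fun i => AActive cls r A X (insert x B') i)).card
            = ((A.erase i0).filter (fun i => AActive cls r (A.erase i0) (insert x X) B' i)).card + 1 := by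
        intro x hxKE B' hB'
        have hxK := Finset.mem_of_mem_erase hxKE
        have hxs := (Finset.mem_erase.1 hxKE).1
        have hxi := (hKmem x).1 hxK
        have hδx := hδ x hxK hxs
        have hBup := basis_up hM hctx hi0 hxi hδx hB'
        have hset : A.filter (fun i => AActive cls r A X (insert x B') i)
            = insert i0 ((A.erase i0).filter (fun i => AActive cls r (A.erase i0) (insert x X) B' i)) := by
          ext i
          simp only [Finset.mem_filter, Finset.mem_insert, Finset.mem_erase]
          by_cases hii0 : i = i0
          · subst hii0
            constructor
            · intro _; exact Or.inl rfl
            · intro _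
              exact ⟨hi0, (act_top hM hctx hi0 hmax).2 ⟨s, hclss, hs⟩⟩
          · constructor
            · rintro ⟨hiA, hactB⟩
              refine Or.inr ⟨⟨hii0, hiA⟩, ?_⟩
              have := (act_transfer hM hctx hi0 hmax hxi hδx hBup.1
                (Finset.mem_insert_self x B') hiA hii0).1 hactB
              rwa [Finset.erase_insert hBup.2] at this
            · rintro (h | ⟨⟨_, hiA⟩, hactB⟩)
              · exact absurd h hii0
              · refine ⟨hiA, ?_⟩
                apply (act_transfer hM hctx hi0 hmax hxi hδx hBup.1
                  (Finset.mem_insert_self x B') hiA hii0).2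
                rwa [Finset.erase_insert hBup.2]
        rw [hset, Finset.card_insert_of_notMem]
        intro h
        exact (Finset.mem_erase.1 (Finset.mem_filter.1 h).1).1 rfl
      -- now compute both sides
      have hKEcard : (K.erase s).card = q - 1 := by
        rw [Finset.card_erase_of_mem hsK, hKq]
      calc ∑ x ∈ K, ∑ T' ∈ Finset.univ.filter (fun T' => ATrans cls (A.erase i0) T'),
            (q - 1) ^ ((insert x T').card - rXx r X (insert x T'))
          = (q - 1) * Lstar + ∑ x ∈ K.erase s, ∑ T' ∈ Finset.univ.filter
              (fun T' => ATrans cls (A.erase i0) T'),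
              (q - 1) ^ ((insert x T').card - rXx r X (insert x T')) := by
            rw [← Finset.add_sum_erase K _ hsK, hinner_s]
        _ = (q - 1) * Lstar + ∑ x ∈ K.erase s, Lstar := by
            congr 1
            apply Finset.sum_congr rfl
            intro x hx
            exact hinner_ne x (Finset.mem_of_mem_erase hx) (Finset.mem_erase.1 hx).1
        _ = (q - 1) * Lstar + (q - 1) * Lstar := by
            rw [Finset.sum_const, hKEcard, smul_eq_mul]
        _ = ∑ x ∈ K.erase s, 2 * Lstar := by
            rw [Finset.sum_const, hKEcard, smul_eq_mul]
            ring
        _ = ∑ x ∈ K.erase s, ∑ B' ∈ Finset.univ.filter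
              (fun B' => ABasis cls r (A.erase i0) (insert x X) B'),
              2 ^ (A.filter (fun i => AActive cls r A X (insert x B') i)).card := by
            apply Finset.sum_congr rfl
            intro x hx
            have hxK := Finset.mem_of_mem_erase hx
            have hxs := (Finset.mem_erase.1 hx).1
            have hstep : (∑ B' ∈ Finset.univ.filter
                (fun B' => ABasis cls r (A.erase i0) (insert x X) B'),
                2 ^ (A.filter (fun i => AActive cls r A X (insert x B') i)).card)
                = ∑ B' ∈ Finset.univ.filter (fun B' => ABasis cls r (A.erase i0) (insert x X) B'),
                  2 * 2 ^ ((A.erase i0).filter (fun i => AActive cls r (A.erase i0) (insert x X) B' i)).card := by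
              apply Finset.sum_congr rfl
              intro B' hB'mem
              rw [hact x hx B' (Finset.mem_filter.1 hB'mem).2, pow_succ, mul_comm]
            rw [hstep, ← Finset.mul_sum,
              ← ih (A.erase i0) (insert x X) hAecard (ctx_step hctx hi0 ((hKmem x).1 hxK)),
              hLx x hxK hxs]
    · -- nonsingular case
      push_neg at hsing
      have hδ : ∀ x ∈ K, r (insert x X) = r X + 1 := by
        intro x hxK
        have hxi := (hKmem x).1 hxK
        have hinj : Subtransversal cls (insert x X) :=
          inj_insert hctx.1 (fun u hu h => hctx.2.1 u hu (by rw [h, hxi]; exact hi0))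
        have hb1 := r_insert_le hM hinj
        have hb2 := r_le_mono hM hinj (Finset.subset_insert x X)
        have := hsing x hxK
        omega
      have hBiff : ∀ B, ABasis cls r A X B ↔
          ∃ x ∈ K, ∃ B', ABasis cls r (A.erase i0) (insert x X) B' ∧ B = insert x B' := by
        intro B
        constructor
        · intro hB
          obtain ⟨b, hbB, hbi⟩ := basis_meets hM hq hcard hctx hB hi0
          have hbK : b ∈ K := (hKmem b).2 hbi
          exact ⟨b, hbK, B.erase b,
            basis_down hM hctx hi0 hbi (hδ b hbK) hB hbB, (Finset.insert_erase hbB).symm⟩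
        · rintro ⟨x, hxK, B', hB', rfl⟩
          exact (basis_up hM hctx hi0 ((hKmem x).1 hxK) (hδ x hxK) hB').1
      have hnotinB : ∀ x ∈ K, ∀ y ∈ K, ∀ B',
          ABasis cls r (A.erase i0) (insert y X) B' → x ∉ B' := by
        intro x hxK y _ B' hB' hmem
        exact (Finset.mem_erase.1 (hB'.1.1.2 x hmem)).1 ((hKmem x).1 hxK)
      rw [sum_decomp (fun B => ABasis cls r A X B)
        (fun x B' => ABasis cls r (A.erase i0) (insert x X) B') _ K hBiff hnotinB]
      apply Finset.sum_congr rfl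
      intro x hxK
      have hxi := (hKmem x).1 hxK
      have hδx := hδ x hxK
      have hstep1 : (∑ T' ∈ Finset.univ.filter (fun T' => ATrans cls (A.erase i0) T'),
          (q - 1) ^ ((insert x T').card - rXx r X (insert x T')))
          = ∑ T' ∈ Finset.univ.filter (fun T' => ATrans cls (A.erase i0) T'),
            (q - 1) ^ (T'.card - rXx r (insert x X) T') := by
        apply Finset.sum_congr rfl
        intro T' hT'mem
        rw [hexp x hxi hδx T' (Finset.mem_filter.1 hT'mem).2.1]
      rw [hstep1, ih (A.erase i0) (insert x X) hAecard (ctx_step hctx hi0 hxi)]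
      apply Finset.sum_congr rfl
      intro B' hB'mem
      have hB' : ABasis cls r (A.erase i0) (insert x X) B' := (Finset.mem_filter.1 hB'mem).2
      have hBup := basis_up hM hctx hi0 hxi hδx hB'
      have hset : A.filter (fun i => AActive cls r A X (insert x B') i)
          = (A.erase i0).filter (fun i => AActive cls r (A.erase i0) (insert x X) B' i) := by
        ext i
        simp only [Finset.mem_filter, Finset.mem_erase]
        by_cases hii0 : i = i0
        · subst hii0
          constructor
          · rintro ⟨_, hactB⟩
            obtain ⟨t, hti, ht⟩ := (act_top hM hctx hi0 hmax).1 hactB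
            exact absurd ht (hsing t ((hKmem t).2 hti))
          · rintro ⟨⟨h, _⟩, _⟩
            exact absurd rfl h
        · constructor
          · rintro ⟨hiA, hactB⟩
            refine ⟨⟨hii0, hiA⟩, ?_⟩
            have := (act_transfer hM hctx hi0 hmax hxi hδx hBup.1
              (Finset.mem_insert_self x B') hiA hii0).1 hactB
            rwa [Finset.erase_insert hBup.2] at this
          · rintro ⟨⟨_, hiA⟩, hactB⟩
            refine ⟨hiA, ?_⟩
            apply (act_transfer hM hctx hi0 hmax hxi hδx hBup.1
              (Finset.mem_insert_self x B') hiA hii0).2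
            rwa [Finset.erase_insert hBup.2]
      rw [hset]

end WithM
end Aux5

/-- for a `q`-matroid with `q ≥ 2`,
`Σ_T (q−1)^{n(T)} = Σ_B 2^{|act(B)|}`. -/

theorem stmt_14 [DecidableEq U] [Fintype U] [DecidableEq ι] [Fintype ι] [LinearOrder ι]
    (cls : U → ι) (r : Finset U → ℕ) (hM : IsMultimatroid cls r)
    (q : ℕ) (hq : 2 ≤ q) (hcard : ∀ i : ι, (skewClass cls i).card = q) :
    ∑ T ∈ Finset.univ.filter (fun T : Finset U => Transversal cls T),
        (q - 1) ^ (T.card - r T)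
      = ∑ B ∈ Finset.univ.filter (fun B : Finset U => MMBasis cls r B),
          2 ^ (Finset.univ.filter (fun i : ι => Active cls r B i)).card := by
  have hctx : Ctx cls (Finset.univ : Finset ι) (∅ : Finset U) :=
    ⟨by intro a ha; exact absurd ha (by simp), by simp, by simp⟩
  have hre : r ∅ = 0 := r_empty hM
  have hrX : ∀ S : Finset U, rXx r ∅ S = r S := by
    intro S; simp [rXx, hre]
  have key := key_lemma hM hq hcard (Finset.univ : Finset ι).card Finset.univ ∅ rfl hctx
  have hTr : ∀ T : Finset U, Transversal cls T ↔ ATrans cls Finset.univ T := by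
    intro T
    constructor
    · intro h; exact ⟨⟨h.1, fun u _ => Finset.mem_univ _⟩, fun i _ => h.2 i⟩
    · intro h; exact ⟨h.1.1, fun i => h.2 i (Finset.mem_univ i)⟩
  have hInd : ∀ S : Finset U, Indep cls r S ↔ AIndep cls r Finset.univ ∅ S := by
    intro S
    constructor
    · intro h; exact ⟨⟨h.1, fun u _ => Finset.mem_univ _⟩, by rw [hrX]; exact h.2⟩
    · intro h; exact ⟨h.1.1, by rw [← hrX S]; exact h.2⟩
  have hBas : ∀ B : Finset U, MMBasis cls r B ↔ ABasis cls r Finset.univ ∅ B := by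
    intro B
    constructor
    · intro h; exact ⟨(hInd B).1 h.1, fun S hS => h.2 S ((hInd S).2 hS)⟩
    · intro h; exact ⟨(hInd B).2 h.1, fun S hS => h.2 S ((hInd S).1 hS)⟩
  have hCir : ∀ C : Finset U, Circuit cls r C ↔ ACircuit cls r Finset.univ ∅ C := by
    intro C
    constructor
    · intro h
      exact ⟨⟨h.1, fun u _ => Finset.mem_univ _⟩, by rw [hrX]; exact h.2.1,
        fun D hD => by rw [hrX]; exact h.2.2 D hD⟩
    · intro h
      exact ⟨h.1.1, by rw [← hrX C]; exact h.2.1,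
        fun D hD => by rw [← hrX D]; exact h.2.2 D hD⟩
  have hAct : ∀ (B : Finset U) (i : ι), Active cls r B i ↔ AActive cls r Finset.univ ∅ B i := by
    intro B i
    unfold Active AActive
    exact exists_congr (fun C => and_congr (hCir C) Iff.rfl)
  calc ∑ T ∈ Finset.univ.filter (fun T : Finset U => Transversal cls T),
        (q - 1) ^ (T.card - r T)
      = ∑ T ∈ Finset.univ.filter (fun T : Finset U => ATrans cls Finset.univ T),
          (q - 1) ^ (T.card - rXx r ∅ T) := by
        apply Finset.sum_congr
        · exact Finset.filter_congr (fun T _ => hTr T)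
        · intro T _; rw [hrX]
    _ = ∑ B ∈ Finset.univ.filter (fun B : Finset U => ABasis cls r Finset.univ ∅ B),
          2 ^ ((Finset.univ : Finset ι).filter (fun i => AActive cls r Finset.univ ∅ B i)).card := key
    _ = ∑ B ∈ Finset.univ.filter (fun B : Finset U => MMBasis cls r B),
          2 ^ (Finset.univ.filter (fun i : ι => Active cls r B i)).card := by
        apply Finset.sum_congr
        · exact Finset.filter_congr (fun B _ => (hBas B).symm)
        · intro B _
          congr 1
          exact congrArg Finset.card (Finset.filter_congr (fun i _ => (hAct B i).symm))
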